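/- Let l_1, l_2, l_3, l_4 be four unit vectors in E^3 with ⟨l_i, l_j⟩ = −1/3 for all i ≠ j, let x be a point of E^3 with ‖x‖ > 1, let φ = arccos(1/‖x‖) and x̂ = x/‖x‖. If φ < π/2 − arccos(1/3), then there exists some j with l_j ∈ C(−x̂, π/2 − φ). -/

import Mathlib

open Metric Real Set RealInnerProductSpace

/-- The open spherical cap `C(ξ, ψ)` on the unit sphere `S² ⊂ E³` with center `ξ`
and radius `ψ`. -/
def openCap (ξ : EuclideanSpace ℝ (Fin 3)) (ψ : ℝ) : Set (EuclideanSpace ℝ (Fin 3)) :=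
  {y ∈ sphere (0 : EuclideanSpace ℝ (Fin 3)) 1 | Real.cos ψ < ⟪ξ, y⟫}

set_option maxHeartbeats 1000000 in
open Finset in
lemma tetra_key (l : Fin 4 → EuclideanSpace ℝ (Fin 3))
    (hl : ∀ i, ‖l i‖ = 1)
    (hij : ∀ i j, i ≠ j → ⟪l i, l j⟫ = -(1 / 3))
    (u : EuclideanSpace ℝ (Fin 3)) (hu : ‖u‖ = 1) :
    ∃ j, ⟪u, l j⟫ ≤ -(1/3) := by
  have hself : ∀ i, ⟪l i, l i⟫ = 1 := by
    intro i; rw [real_inner_self_eq_norm_sq, hl]; norm_num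
  -- linear independence of l 0, l 1, l 2
  have hli : LinearIndependent ℝ (fun i : Fin 3 => l i.castSucc) := by
    rw [Fintype.linearIndependent_iff]
    intro g hg
    have h0 : ⟪l 0, ∑ i : Fin 3, g i • l i.castSucc⟫ = 0 := by rw [hg]; simp
    have h1 : ⟪l 1, ∑ i : Fin 3, g i • l i.castSucc⟫ = 0 := by rw [hg]; simp
    have h2 : ⟪l 2, ∑ i : Fin 3, g i • l i.castSucc⟫ = 0 := by rw [hg]; simp
    simp only [inner_add_right, real_inner_smul_right, Fin.sum_univ_three] at h0 h1 h2
    have e00 := hself 0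
    have e01 := hij 0 1 (by decide); have e02 := hij 0 2 (by decide)
    have e10 := hij 1 0 (by decide); have e11 := hself 1
    have e12 := hij 1 2 (by decide)
    have e20 := hij 2 0 (by decide); have e21 := hij 2 1 (by decide)
    have e22 := hself 2
    have c0 : (Fin.castSucc 0 : Fin 4) = 0 := by decide
    have c1 : (Fin.castSucc 1 : Fin 4) = 1 := by decide
    have c2 : (Fin.castSucc 2 : Fin 4) = 2 := by decide
    rw [c0, c1, c2] at h0 h1 h2
    rw [e00, e01, e02] at h0
    rw [e10, e11, e12] at h1
    rw [e20, e21, e22] at h2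
    intro i; fin_cases i <;> [skip; skip; skip] <;> simp <;> linarith
  have hcard : Fintype.card (Fin 3) = Module.finrank ℝ (EuclideanSpace ℝ (Fin 3)) := by
    simp
  let B := basisOfLinearIndependentOfCardEqFinrank hli hcard
  have hB : ∀ i, B i = l i.castSucc := fun i => by
    simp [B, coe_basisOfLinearIndependentOfCardEqFinrank]
  have hrepr : u = ∑ i : Fin 3, B.repr u i • l i.castSucc := by
    conv_lhs => rw [← B.sum_repr u]
    exact Finset.sum_congr rfl fun i _ => by rw [hB]
  set a : Fin 3 → ℝ := fun i => B.repr u i with ha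
  set b : Fin 4 → ℝ := ![a 0, a 1, a 2, 0] with hb
  have hub : u = ∑ j : Fin 4, b j • l j := by
    rw [hrepr, Fin.sum_univ_four, Fin.sum_univ_three]
    have c0 : (Fin.castSucc 0 : Fin 4) = 0 := by decide
    have c1 : (Fin.castSucc 1 : Fin 4) = 1 := by decide
    have c2 : (Fin.castSucc 2 : Fin 4) = 2 := by decide
    rw [c0, c1, c2]
    simp [hb, ha]
  have hcval : ∀ j, ⟪u, l j⟫ = ∑ k : Fin 4, b k * ⟪l k, l j⟫ := by
    intro j
    conv_lhs => rw [hub]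
    rw [sum_inner]
    exact Finset.sum_congr rfl fun k _ => by rw [real_inner_smul_left]
  have hce0 : ⟪u, l 0⟫ = 4/3 * b 0 - (b 0 + b 1 + b 2 + b 3)/3 := by
    rw [hcval 0, Fin.sum_univ_four, hself 0, hij 1 0 (by decide), hij 2 0 (by decide),
      hij 3 0 (by decide)]; ring
  have hce1 : ⟪u, l 1⟫ = 4/3 * b 1 - (b 0 + b 1 + b 2 + b 3)/3 := by
    rw [hcval 1, Fin.sum_univ_four, hself 1, hij 0 1 (by decide), hij 2 1 (by decide),
      hij 3 1 (by decide)]; ring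
  have hce2 : ⟪u, l 2⟫ = 4/3 * b 2 - (b 0 + b 1 + b 2 + b 3)/3 := by
    rw [hcval 2, Fin.sum_univ_four, hself 2, hij 0 2 (by decide), hij 1 2 (by decide),
      hij 3 2 (by decide)]; ring
  have hce3 : ⟪u, l 3⟫ = 4/3 * b 3 - (b 0 + b 1 + b 2 + b 3)/3 := by
    rw [hcval 3, Fin.sum_univ_four, hself 3, hij 0 3 (by decide), hij 1 3 (by decide),
      hij 2 3 (by decide)]; ring
  have hone : b 0 * ⟪u, l 0⟫ + b 1 * ⟪u, l 1⟫ + b 2 * ⟪u, l 2⟫ + b 3 * ⟪u, l 3⟫ = 1 := by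
    have huu : ⟪u, u⟫ = 1 := by rw [real_inner_self_eq_norm_sq, hu]; norm_num
    calc b 0 * ⟪u, l 0⟫ + b 1 * ⟪u, l 1⟫ + b 2 * ⟪u, l 2⟫ + b 3 * ⟪u, l 3⟫
        = ⟪u, ∑ j : Fin 4, b j • l j⟫ := by
          rw [inner_sum, Fin.sum_univ_four]
          simp only [real_inner_smul_right]
      _ = 1 := by rw [← hub, huu]
  have hcs : ⟪u, l 0⟫ + ⟪u, l 1⟫ + ⟪u, l 2⟫ + ⟪u, l 3⟫ = 0 := by
    linear_combination hce0 + hce1 + hce2 + hce3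
  have hcsq : ⟪u, l 0⟫^2 + ⟪u, l 1⟫^2 + ⟪u, l 2⟫^2 + ⟪u, l 3⟫^2 = 4/3 := by
    linear_combination (⟪u, l 0⟫ - (b 0 + b 1 + b 2 + b 3)/3) * hce0
      + (⟪u, l 1⟫ - (b 0 + b 1 + b 2 + b 3)/3) * hce1
      + (⟪u, l 2⟫ - (b 0 + b 1 + b 2 + b 3)/3) * hce2
      + (⟪u, l 3⟫ - (b 0 + b 1 + b 2 + b 3)/3) * hce3
      + 4/3 * hone
  by_contra h
  push_neg at h
  have h0 := h 0; have h1 := h 1; have h2 := h 2; have h3 := h 3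
  nlinarith [mul_pos (by linarith : (0:ℝ) < ⟪u, l 0⟫ + 1/3) (by linarith : (0:ℝ) < ⟪u, l 1⟫ + 1/3),
    mul_pos (by linarith : (0:ℝ) < ⟪u, l 0⟫ + 1/3) (by linarith : (0:ℝ) < ⟪u, l 2⟫ + 1/3),
    mul_pos (by linarith : (0:ℝ) < ⟪u, l 0⟫ + 1/3) (by linarith : (0:ℝ) < ⟪u, l 3⟫ + 1/3),
    mul_pos (by linarith : (0:ℝ) < ⟪u, l 1⟫ + 1/3) (by linarith : (0:ℝ) < ⟪u, l 2⟫ + 1/3),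
    mul_pos (by linarith : (0:ℝ) < ⟪u, l 1⟫ + 1/3) (by linarith : (0:ℝ) < ⟪u, l 3⟫ + 1/3),
    mul_pos (by linarith : (0:ℝ) < ⟪u, l 2⟫ + 1/3) (by linarith : (0:ℝ) < ⟪u, l 3⟫ + 1/3),
    hcsq, hcs, sq_nonneg (⟪u, l 0⟫ + ⟪u, l 1⟫ + ⟪u, l 2⟫ + ⟪u, l 3⟫)]

/-- Let `l₁, …, l₄` be the vertices of a regular tetrahedron inscribed in the unit
sphere, and let `x` be a point with `‖x‖ > 1` whose base cap radius
`φ = arccos(1/‖x‖)` satisfies `φ < π/2 − arccos(1/3)`. Then some `lⱼ` lies in the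
open cap `C(−x̂, π/2 − φ)`, i.e. the vertex `x` is illuminated by some direction of
any rotation of the vertices of a regular inscribed tetrahedron. -/
theorem small_caps_illuminated_by_tetrahedron
    (l : Fin 4 → EuclideanSpace ℝ (Fin 3))
    (hl : ∀ i, ‖l i‖ = 1)
    (hij : ∀ i j, i ≠ j → ⟪l i, l j⟫ = -(1 / 3))
    (x : EuclideanSpace ℝ (Fin 3)) (hx : 1 < ‖x‖)
    (hφ : Real.arccos (1 / ‖x‖) < Real.pi / 2 - Real.arccos (1 / 3)) :
    ∃ j, l j ∈
      openCap (-(‖x‖⁻¹ • x)) (Real.pi / 2 - Real.arccos (1 / ‖x‖)) := by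
  have hx0 : ‖x‖ ≠ 0 := by positivity
  have hu : ‖‖x‖⁻¹ • x‖ = 1 := by
    rw [norm_smul, norm_inv, norm_norm, inv_mul_cancel₀ hx0]
  obtain ⟨j, hj⟩ := tetra_key l hl hij (‖x‖⁻¹ • x) hu
  refine ⟨j, ?_, ?_⟩
  · simpa [mem_sphere_zero_iff_norm] using hl j
  · -- cos (π/2 - φ) = sin φ < 1/3 ≤ -⟪u, l j⟫
    have hsin : Real.sin (Real.arccos (1 / ‖x‖)) < 1/3 := by
      have hmem1 : Real.arccos (1 / ‖x‖) ∈ Icc (-(π/2)) (π/2) := by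
        constructor
        · linarith [Real.arccos_nonneg (1 / ‖x‖), Real.pi_pos]
        · linarith [Real.arccos_nonneg (1/3 : ℝ)]
      have hmem2 : π / 2 - Real.arccos (1/3) ∈ Icc (-(π/2)) (π/2) := by
        constructor
        · have := Real.arccos_le_pi (1/3 : ℝ); linarith
        · linarith [Real.arccos_nonneg (1/3 : ℝ)]
      have := Real.strictMonoOn_sin hmem1 hmem2 hφ
      rwa [Real.sin_pi_div_two_sub, Real.cos_arccos (by norm_num) (by norm_num)] at this
    rw [Real.cos_pi_div_two_sub, inner_neg_left]
    have : ⟪‖x‖⁻¹ • x, l j⟫ ≤ -(1/3) := hj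
    linarith
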